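/- arXiv:1903.12222 — 5 statements merged into one kernel-verified Lean document; each statement's English description precedes it below -/
import Mathlib

section
/- Let A and B be self-adjoint linear operators on an n-dimensional complex inner product space, and let Ã = A + B. Let λ₁ ≥ ⋯ ≥ λₙ, e₁ ≥ ⋯ ≥ eₙ, λ̃₁ ≥ ⋯ ≥ λ̃ₙ be the eigenvalues of A, B, Ã respectively (with multiplicity). Then ∑_{j=1}^n |λ̃_j − λ_j| ≤ ∑_{j=1}^n |e_j|. -/
/-!
Weyl's monotonicity principle: if `N - M` is positive semidefinite, then the `j`-th largest
eigenvalue of `M` is at most that of `N`, because the span of the top `j + 1` eigenvectors of `M`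
meets the span of the bottom `n - j` eigenvectors of `N`, and the Rayleigh quotients compare there.
Split `B = P - Q` into its positive and negative parts and put `C = A + P`. Then `C ≥ A` and
`C ≥ A + B`, so `|λ̃ⱼ - λⱼ| ≤ (γⱼ - λⱼ) + (γⱼ - λ̃ⱼ)` for the sorted eigenvalues `γ` of `C`.
Summing, the right-hand side is `2 tr C - tr A - tr (A + B) = tr P + tr Q = ∑ |eⱼ|`.
-/

open scoped InnerProductSpace MatrixOrder ComplexOrder
open RCLike

namespace OrthonormalBasis

variable {𝕜 E ι : Type*} [RCLike 𝕜] [NormedAddCommGroup E] [InnerProductSpace 𝕜 E] [Fintype ι]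
  {T : E →ₗ[𝕜] E} {μ : ι → ℝ}

theorem re_inner_apply_self_eq_sum (b : OrthonormalBasis ι 𝕜 E)
    (hT : ∀ i, T (b i) = (μ i : 𝕜) • b i) (x : E) :
    re ⟪T x, x⟫_𝕜 = ∑ i, μ i * ‖⟪b i, x⟫_𝕜‖ ^ 2 := by
  have hTx : T x = ∑ i, ((μ i : 𝕜) * ⟪b i, x⟫_𝕜) • b i := by
    conv_lhs => rw [← b.sum_repr' x]
    simp only [map_sum, map_smul, hT, smul_smul, mul_comm]
  rw [hTx, sum_inner, map_sum]
  refine Finset.sum_congr rfl fun i _ => ?_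
  rw [inner_smul_left, (starRingEnd 𝕜).map_mul, conj_ofReal, mul_assoc, RCLike.conj_mul]
  norm_cast

theorem mul_norm_sq_le_re_inner_apply_self [LinearOrder ι] (b : OrthonormalBasis ι 𝕜 E)
    (hT : ∀ i, T (b i) = (μ i : 𝕜) • b i) (hμ : Antitone μ) {j : ι} {x : E}
    (hx : ∀ i, j < i → ⟪b i, x⟫_𝕜 = 0) :
    μ j * ‖x‖ ^ 2 ≤ re ⟪T x, x⟫_𝕜 := by
  rw [b.re_inner_apply_self_eq_sum hT, ← b.sum_sq_norm_inner_right, Finset.mul_sum]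
  refine Finset.sum_le_sum fun i _ => ?_
  rcases le_or_gt i j with hij | hji
  · exact mul_le_mul_of_nonneg_right (hμ hij) (by positivity)
  · simp [hx i hji]

theorem re_inner_apply_self_le_mul_norm_sq [LinearOrder ι] (b : OrthonormalBasis ι 𝕜 E)
    (hT : ∀ i, T (b i) = (μ i : 𝕜) • b i) (hμ : Antitone μ) {j : ι} {x : E}
    (hx : ∀ i, i < j → ⟪b i, x⟫_𝕜 = 0) :
    re ⟪T x, x⟫_𝕜 ≤ μ j * ‖x‖ ^ 2 := by
  rw [b.re_inner_apply_self_eq_sum hT, ← b.sum_sq_norm_inner_right, Finset.mul_sum]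
  refine Finset.sum_le_sum fun i _ => ?_
  rcases lt_or_ge i j with hij | hji
  · simp [hx i hij]
  · exact mul_le_mul_of_nonneg_right (hμ hji) (by positivity)

end OrthonormalBasis

theorem LinearMap.IsPositive.eigenvalue_le {𝕜 E : Type*} [RCLike 𝕜] [NormedAddCommGroup E]
    [InnerProductSpace 𝕜 E] {n : ℕ} {S T : E →ₗ[𝕜] E} (hST : (T - S).IsPositive)
    {b c : OrthonormalBasis (Fin n) 𝕜 E} {μ ν : Fin n → ℝ} (hμ : Antitone μ) (hν : Antitone ν)
    (hb : ∀ i, S (b i) = (μ i : 𝕜) • b i) (hc : ∀ i, T (c i) = (ν i : 𝕜) • c i) (j : Fin n) :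
    μ j ≤ ν j := by
  have : FiniteDimensional 𝕜 E := b.toBasis.finiteDimensional_of_finite
  let F : E →ₗ[𝕜] (Finset.Ioi j → 𝕜) × (Finset.Iio j → 𝕜) :=
    (LinearMap.pi fun i : Finset.Ioi j => innerₛₗ 𝕜 (b i)).prod
      (LinearMap.pi fun i : Finset.Iio j => innerₛₗ 𝕜 (c i))
  have hdim : Module.finrank 𝕜 ((Finset.Ioi j → 𝕜) × (Finset.Iio j → 𝕜)) <
      Module.finrank 𝕜 E := by
    rw [Module.finrank_prod, Module.finrank_fintype_fun_eq_card,
      Module.finrank_fintype_fun_eq_card, Fintype.card_coe, Fintype.card_coe, Fin.card_Ioi,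
      Fin.card_Iio, Module.finrank_eq_card_basis b.toBasis, Fintype.card_fin]
    omega
  obtain ⟨x, hxF, hx0⟩ :=
    Submodule.exists_mem_ne_zero_of_ne_bot (LinearMap.ker_ne_bot_of_finrank_lt (f := F) hdim)
  have hFx := LinearMap.mem_ker.mp hxF
  have hxb : ∀ i, j < i → ⟪b i, x⟫_𝕜 = 0 := fun i hi => by
    simpa [F] using congr_fun (congr_arg Prod.fst hFx) ⟨i, Finset.mem_Ioi.mpr hi⟩
  have hxc : ∀ i, i < j → ⟪c i, x⟫_𝕜 = 0 := fun i hi => by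
    simpa [F] using congr_fun (congr_arg Prod.snd hFx) ⟨i, Finset.mem_Iio.mpr hi⟩
  have hquad : re ⟪S x, x⟫_𝕜 ≤ re ⟪T x, x⟫_𝕜 := by
    simpa [inner_sub_left] using hST.re_inner_nonneg_left x
  have hbound : μ j * ‖x‖ ^ 2 ≤ ν j * ‖x‖ ^ 2 :=
    (b.mul_norm_sq_le_re_inner_apply_self hb hμ hxb).trans
      (hquad.trans (c.re_inner_apply_self_le_mul_norm_sq hc hν hxc))
  exact le_of_mul_le_mul_right hbound (by positivity)

theorem Tuple.exists_perm_antitone_comp {α : Type*} [LinearOrder α] {n : ℕ} (f : Fin n → α) :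
    ∃ σ : Equiv.Perm (Fin n), Antitone (f ∘ σ) :=
  ⟨Fin.revPerm.trans (Tuple.sort f),
    (Tuple.monotone_sort f).comp_antitone fun _ _ => Fin.rev_le_rev.mpr⟩

namespace Matrix.IsHermitian

section

variable {𝕜 n : Type*} [RCLike 𝕜] [Fintype n] [DecidableEq n] {A : Matrix n n 𝕜}

theorem toEuclideanLin_eigenvectorBasis (hA : A.IsHermitian) (i : n) :
    A.toEuclideanLin (hA.eigenvectorBasis i) = (hA.eigenvalues i : 𝕜) • hA.eigenvectorBasis i := by
  rw [toLpLin_apply, hA.mulVec_eigenvectorBasis, WithLp.toLp_smul, WithLp.toLp_ofLp,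
    RCLike.real_smul_eq_coe_smul (K := 𝕜)]

theorem sum_eq_re_trace (hA : A.IsHermitian) {μ : n → ℝ}
    (hμ : ∃ σ : Equiv.Perm n, μ = hA.eigenvalues ∘ σ) : ∑ i, μ i = re A.trace := by
  obtain ⟨σ, rfl⟩ := hμ
  simp [hA.trace_eq_sum_eigenvalues, Equiv.sum_comp σ hA.eigenvalues]

theorem trace_cfc (hA : A.IsHermitian) (f : ℝ → ℝ) :
    (cfc f A).trace = ∑ i, (f (hA.eigenvalues i) : 𝕜) := by
  rw [hA.cfc_eq, IsHermitian.cfc, Unitary.conjStarAlgAut_apply, trace_mul_cycle,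
    Unitary.coe_star_mul_self, one_mul, trace_diagonal]
  rfl

theorem exists_posSemidef_sub_eq (hA : A.IsHermitian) :
    ∃ P Q : Matrix n n 𝕜, P.PosSemidef ∧ Q.PosSemidef ∧ A = P - Q ∧
      re P.trace + re Q.trace = ∑ i, |hA.eigenvalues i| := by
  refine ⟨cfc (fun x : ℝ => x⁺) A, cfc (fun x : ℝ => x⁻) A, ?_, ?_, ?_, ?_⟩
  · exact nonneg_iff_posSemidef.mp (cfc_nonneg fun x _ => posPart_nonneg x)
  · exact nonneg_iff_posSemidef.mp (cfc_nonneg fun x _ => negPart_nonneg x)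
  · rw [← cfc_sub (fun x : ℝ => x⁺) (fun x : ℝ => x⁻) A]
    simp only [posPart_sub_negPart]
    exact (cfc_id' ℝ A).symm
  · simp [hA.trace_cfc, ← Finset.sum_add_distrib, posPart_add_negPart]

end

section

variable {𝕜 : Type*} [RCLike 𝕜] {n : ℕ}

theorem le_of_posSemidef_sub {M N : Matrix (Fin n) (Fin n) 𝕜} (hM : M.IsHermitian)
    (hN : N.IsHermitian) (hMN : (N - M).PosSemidef) {μ ν : Fin n → ℝ}
    (hμa : Antitone μ) (hνa : Antitone ν) (hμ : ∃ σ : Equiv.Perm (Fin n), μ = hM.eigenvalues ∘ σ)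
    (hν : ∃ σ : Equiv.Perm (Fin n), ν = hN.eigenvalues ∘ σ) : μ ≤ ν := by
  obtain ⟨σ, rfl⟩ := hμ
  obtain ⟨τ, rfl⟩ := hν
  refine LinearMap.IsPositive.eigenvalue_le (S := M.toEuclideanLin) (T := N.toEuclideanLin)
    (b := hM.eigenvectorBasis.reindex σ.symm) (c := hN.eigenvectorBasis.reindex τ.symm)
    ?_ hμa hνa (fun i => ?_) (fun i => ?_)
  · rwa [← map_sub, isPositive_toEuclideanLin_iff]
  · simpa using hM.toEuclideanLin_eigenvectorBasis (σ i)
  · simpa using hN.toEuclideanLin_eigenvectorBasis (τ i)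

theorem sum_abs_sub_le_re_trace_add_re_trace {A B P Q : Matrix (Fin n) (Fin n) 𝕜}
    (hA : A.IsHermitian) (hT : (A + B).IsHermitian) (hP : P.PosSemidef) (hQ : Q.PosSemidef)
    (hB : B = P - Q) {lam lamt : Fin n → ℝ} (hlam : Antitone lam) (hlamt : Antitone lamt)
    (hlam' : ∃ σ : Equiv.Perm (Fin n), lam = hA.eigenvalues ∘ σ)
    (hlamt' : ∃ σ : Equiv.Perm (Fin n), lamt = hT.eigenvalues ∘ σ) :
    ∑ j, |lamt j - lam j| ≤ re P.trace + re Q.trace := by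
  have hC : (A + P).IsHermitian := hA.add hP.isHermitian
  obtain ⟨σ, hγ⟩ := Tuple.exists_perm_antitone_comp hC.eigenvalues
  have hlam_le : ∀ j, lam j ≤ hC.eigenvalues (σ j) :=
    le_of_posSemidef_sub hA hC (by simpa using hP) hlam hγ hlam' ⟨σ, rfl⟩
  have hlamt_le : ∀ j, lamt j ≤ hC.eigenvalues (σ j) :=
    le_of_posSemidef_sub hT hC (by simpa [hB] using hQ) hlamt hγ hlamt' ⟨σ, rfl⟩
  have htrace_C := hC.sum_eq_re_trace ⟨σ, rfl⟩
  have htrace_A := hA.sum_eq_re_trace hlam'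
  have htrace_T := hT.sum_eq_re_trace hlamt'
  simp only [hB, trace_add, trace_sub, map_add, map_sub, Function.comp_apply] at htrace_C htrace_T
  calc ∑ j, |lamt j - lam j|
      ≤ ∑ j, ((hC.eigenvalues (σ j) - lam j) + (hC.eigenvalues (σ j) - lamt j)) :=
        Finset.sum_le_sum fun j _ => abs_sub_le_iff.mpr
          ⟨by linarith [hlam_le j, hlamt_le j], by linarith [hlam_le j, hlamt_le j]⟩
    _ = re P.trace + re Q.trace := by
        simp only [Finset.sum_add_distrib, Finset.sum_sub_distrib]
        linarith

end

end Matrix.IsHermitian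

theorem stmt2_general (n : ℕ) (A B : Matrix (Fin n) (Fin n) ℂ)
    (hA : A.IsHermitian) (hB : B.IsHermitian) (hT : (A + B).IsHermitian)
    (lam e lamt : Fin n → ℝ)
    (hlam : Antitone lam) (hlamt : Antitone lamt)
    (hlam' : ∃ σ : Equiv.Perm (Fin n), lam = hA.eigenvalues ∘ σ)
    (he' : ∃ σ : Equiv.Perm (Fin n), e = hB.eigenvalues ∘ σ)
    (hlamt' : ∃ σ : Equiv.Perm (Fin n), lamt = hT.eigenvalues ∘ σ) :
    ∑ j, |lamt j - lam j| ≤ ∑ j, |e j| := by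
  obtain ⟨P, Q, hP, hQ, hPQ, htrace⟩ := hB.exists_posSemidef_sub_eq
  obtain ⟨σ, rfl⟩ := he'
  calc ∑ j, |lamt j - lam j| ≤ re P.trace + re Q.trace :=
        hA.sum_abs_sub_le_re_trace_add_re_trace hT hP hQ hPQ hlam hlamt hlam' hlamt'
    _ = ∑ j, |hB.eigenvalues (σ j)| := by
        rw [htrace]
        exact (Equiv.sum_comp σ fun i => |hB.eigenvalues i|).symm

/-- Ky Fan / Lidskii inequality: if `A`, `B` are Hermitian and `Ã = A + B`, with
eigenvalues `lam`, `e`, `lamt` respectively, listed in nonincreasing order with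
multiplicity, then `∑ |lamt j - lam j| ≤ ∑ |e j|`. -/
theorem stmt2 (n : ℕ) (A B : Matrix (Fin n) (Fin n) ℂ)
    (hA : A.IsHermitian) (hB : B.IsHermitian) (hT : (A + B).IsHermitian)
    (lam e lamt : Fin n → ℝ)
    (hlam : Antitone lam) (he : Antitone e) (hlamt : Antitone lamt)
    (hlam' : ∃ σ : Equiv.Perm (Fin n), lam = hA.eigenvalues ∘ σ)
    (he' : ∃ σ : Equiv.Perm (Fin n), e = hB.eigenvalues ∘ σ)
    (hlamt' : ∃ σ : Equiv.Perm (Fin n), lamt = hT.eigenvalues ∘ σ) :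
    ∑ j, |lamt j - lam j| ≤ ∑ j, |e j| :=
  stmt2_general n A B hA hB hT lam e lamt hlam hlamt hlam' he' hlamt'
end

section
/- Let A and B be self-adjoint linear operators on an n-dimensional complex inner product space, Ã = A + B, with eigenvalues λ₁ ≥ ⋯ ≥ λₙ, e₁ ≥ ⋯ ≥ eₙ, λ̃₁ ≥ ⋯ ≥ λ̃ₙ of A, B, Ã respectively. Then for any convex continuous function φ: ℝ → ℝ, ∑_{j=1}^n φ(λ̃_j − λ_j) ≤ ∑_{j=1}^n φ(e_j). -/
/-!
Fix `k` and put `c = e_k`. Let `P` be the positive part of `B - c`: it has the eigenvectors of `B`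
and eigenvalues `max (e_j - c) 0`. Then `B ≤ P + c` and `0 ≤ P` in the Loewner order, so Weyl's
monotonicity principle (the Courant–Fischer dimension count) gives `λ̃_j ≤ ν_j + c` and `λ_j ≤ ν_j`
for the eigenvalues `ν` of `A + P`. Summing over any `k` indices and using
`tr P = ∑_{j ≤ k} (e_j - c)` yields Lidskii's inequality: any `k` of the differences `λ̃_j - λ_j`
sum to at most `e_1 + ⋯ + e_k`. Both sides have total `tr B`, so the sorted differences are
majorized by `e`, and Karamata's inequality, proved by Abel summation against the monotone right
derivative of `φ`, concludes.
-/

open Finset Module Submodule InnerProductSpace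
open scoped InnerProductSpace

theorem ConvexOn.add_rightDeriv_mul_sub_le {φ : ℝ → ℝ} (hφ : ConvexOn ℝ Set.univ φ) (x y : ℝ) :
    φ x + derivWithin φ (Set.Ioi x) x * (y - x) ≤ φ y := by
  have hx : x ∈ interior Set.univ := by simp
  rcases lt_trichotomy x y with hxy | rfl | hyx
  · have h := hφ.rightDeriv_le_slope_of_mem_interior hx (Set.mem_univ y) hxy
    rw [slope_def_field, le_div_iff₀ (sub_pos.2 hxy)] at h
    linarith
  · simp
  · have h := (hφ.slope_le_leftDeriv_of_mem_interior (Set.mem_univ y) hx hyx).trans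
      (hφ.leftDeriv_le_rightDeriv_of_mem_interior hx)
    rw [slope_def_field, div_le_iff₀ (sub_pos.2 hyx)] at h
    linarith

theorem ConvexOn.monotone_rightDeriv {φ : ℝ → ℝ} (hφ : ConvexOn ℝ Set.univ φ) :
    Monotone fun x => derivWithin φ (Set.Ioi x) x := by
  simpa using hφ.monotoneOn_rightDeriv

theorem Finset.sum_mul_le_mul_sum_of_antitone {ι : Type*} [LinearOrder ι] {s d : ι → ℝ}
    (hs : Antitone s) (T : Finset ι) (hd : ∀ i ∈ T, ∑ j ∈ T with j ≤ i, d j ≤ 0) {c : ℝ}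
    (hc : ∀ j ∈ T, c ≤ s j) : ∑ j ∈ T, s j * d j ≤ c * ∑ j ∈ T, d j := by
  induction T using Finset.induction_on_max generalizing c with
  | empty => simp
  | insert a T hlt ih =>
    have haT : a ∉ T := fun h => lt_irrefl a (hlt a h)
    have hT : ∑ j ∈ T, s j * d j ≤ s a * ∑ j ∈ T, d j := by
      refine ih (fun i hi => ?_) fun j hj => hs (hlt j hj).le
      have := hd i (mem_insert_of_mem hi)
      rwa [filter_insert, if_neg (not_le.2 (hlt i hi))] at this
    have htot : ∑ j ∈ insert a T, d j ≤ 0 := by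
      have hle : ∀ j ∈ insert a T, j ≤ a := fun j hj =>
        (mem_insert.1 hj).elim le_of_eq fun h => (hlt j h).le
      simpa [filter_true_of_mem hle] using hd a (mem_insert_self a T)
    rw [sum_insert haT] at htot ⊢
    rw [sum_insert haT]
    calc s a * d a + ∑ j ∈ T, s j * d j ≤ s a * (d a + ∑ j ∈ T, d j) := by linarith
      _ ≤ c * (d a + ∑ j ∈ T, d j) :=
        mul_le_mul_of_nonpos_right (hc a (mem_insert_self a T)) htot

theorem ConvexOn.sum_le_sum_of_sum_Iic_le {ι : Type*} [LinearOrder ι] [Fintype ι]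
    [LocallyFiniteOrderBot ι] {φ : ℝ → ℝ} (hφ : ConvexOn ℝ Set.univ φ) {a b : ι → ℝ}
    (ha : Antitone a) (hab : ∀ i, ∑ j ∈ Iic i, a j ≤ ∑ j ∈ Iic i, b j)
    (hsum : ∑ j, a j = ∑ j, b j) : ∑ j, φ (a j) ≤ ∑ j, φ (b j) := by
  set s := fun j => derivWithin φ (Set.Ioi (a j)) (a j)
  obtain ⟨c, hc⟩ := (Set.finite_range s).bddBelow
  have hsd : ∑ j, s j * (a j - b j) ≤ 0 := by
    have := sum_mul_le_mul_sum_of_antitone (d := fun j => a j - b j)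
      (hφ.monotone_rightDeriv.comp_antitone ha) univ
      (fun i _ => by simpa [filter_ge_eq_Iic, sum_sub_distrib] using hab i)
      (fun j _ => hc ⟨j, rfl⟩)
    rwa [sum_sub_distrib, hsum, sub_self, mul_zero] at this
  have hsub : ∀ j, φ (a j) - φ (b j) ≤ s j * (a j - b j) := fun j => by
    linarith [hφ.add_rightDeriv_mul_sub_le (a j) (b j)]
  calc ∑ j, φ (a j) = ∑ j, φ (b j) + ∑ j, (φ (a j) - φ (b j)) := by
        rw [sum_sub_distrib]; ring
    _ ≤ ∑ j, φ (b j) + ∑ j, s j * (a j - b j) := by gcongr with j; exact hsub j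
    _ ≤ ∑ j, φ (b j) := by linarith

theorem exists_perm_antitone_comp {n : ℕ} (x : Fin n → ℝ) :
    ∃ ρ : Equiv.Perm (Fin n), Antitone (x ∘ ρ) :=
  ⟨Tuple.sort (-x), fun _ _ h => neg_le_neg_iff.1 (Tuple.monotone_sort (-x) h)⟩

theorem Antitone.sum_max_sub_eq_sum_Iic {ι : Type*} [LinearOrder ι] [Fintype ι]
    [LocallyFiniteOrderBot ι] {e : ι → ℝ} (he : Antitone e) (i : ι) :
    ∑ j, max (e j - e i) 0 = ∑ j ∈ Iic i, (e j - e i) := by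
  rw [← sum_subset (subset_univ (Iic i)) fun j _ hj => ?_]
  · exact sum_congr rfl fun j hj => max_eq_left (sub_nonneg.2 (he (mem_Iic.1 hj)))
  · exact max_eq_right (sub_nonpos.2 (he (le_of_not_ge (by simpa using hj))))

section InnerProductSpace

variable {𝕜 E : Type*} [RCLike 𝕜] [NormedAddCommGroup E] [InnerProductSpace 𝕜 E]

namespace OrthonormalBasis

variable {ι : Type*} [Fintype ι] (w : OrthonormalBasis ι 𝕜 E) {T S : E →ₗ[𝕜] E} {μ ν : ι → ℝ}

theorem re_inner_apply_eq_sum (hT : ∀ j, T (w j) = (μ j : 𝕜) • w j) (x : E) :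
    RCLike.re ⟪x, T x⟫_𝕜 = ∑ j, μ j * ‖⟪w j, x⟫_𝕜‖ ^ 2 := by
  have hTx : T x = ∑ j, ((μ j : 𝕜) * ⟪w j, x⟫_𝕜) • w j := by
    conv_lhs => rw [← w.sum_repr' x]
    simp only [map_sum, map_smul, hT, smul_smul, mul_comm]
  rw [hTx, inner_sum, map_sum]
  refine sum_congr rfl fun j _ => ?_
  rw [inner_smul_right, ← inner_conj_symm x, mul_assoc, RCLike.mul_conj,
    ← RCLike.ofReal_pow, ← RCLike.ofReal_mul, RCLike.ofReal_re]

theorem re_inner_le_add_of_le (hT : ∀ j, T (w j) = (μ j : 𝕜) • w j)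
    (hS : ∀ j, S (w j) = (ν j : 𝕜) • w j) {c : ℝ} (h : ∀ j, μ j ≤ ν j + c) (x : E) :
    RCLike.re ⟪x, T x⟫_𝕜 ≤ RCLike.re ⟪x, S x⟫_𝕜 + c * ‖x‖ ^ 2 := by
  rw [w.re_inner_apply_eq_sum hT, w.re_inner_apply_eq_sum hS, ← w.sum_sq_norm_inner_right x,
    mul_sum, ← sum_add_distrib]
  exact sum_le_sum fun j _ => by nlinarith [h j, sq_nonneg ‖⟪w j, x⟫_𝕜‖]

theorem inner_eq_zero_of_mem_span_image {s : Set ι} {x : E} (hx : x ∈ span 𝕜 (w '' s)) {j : ι}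
    (hj : j ∉ s) : ⟪w j, x⟫_𝕜 = 0 := by
  have : span 𝕜 (w '' s) ≤ (𝕜 ∙ w j)ᗮ := by
    rw [span_le]
    rintro _ ⟨k, hk, rfl⟩
    exact mem_orthogonal_singleton_iff_inner_right.2 (w.orthonormal.2 fun h => hj (h ▸ hk))
  exact mem_orthogonal_singleton_iff_inner_right.1 (this hx)

theorem mul_norm_sq_le_re_inner_of_mem_span (hT : ∀ j, T (w j) = (μ j : 𝕜) • w j) {s : Set ι}
    {c : ℝ} (hc : ∀ j ∈ s, c ≤ μ j) {x : E} (hx : x ∈ span 𝕜 (w '' s)) :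
    c * ‖x‖ ^ 2 ≤ RCLike.re ⟪x, T x⟫_𝕜 := by
  rw [w.re_inner_apply_eq_sum hT, ← w.sum_sq_norm_inner_right x, mul_sum]
  refine sum_le_sum fun j _ => ?_
  by_cases hj : j ∈ s
  · exact mul_le_mul_of_nonneg_right (hc j hj) (sq_nonneg _)
  · simp [w.inner_eq_zero_of_mem_span_image hx hj]

theorem re_inner_le_mul_norm_sq_of_mem_span (hT : ∀ j, T (w j) = (μ j : 𝕜) • w j) {s : Set ι}
    {c : ℝ} (hc : ∀ j ∈ s, μ j ≤ c) {x : E} (hx : x ∈ span 𝕜 (w '' s)) :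
    RCLike.re ⟪x, T x⟫_𝕜 ≤ c * ‖x‖ ^ 2 := by
  rw [w.re_inner_apply_eq_sum hT, ← w.sum_sq_norm_inner_right x, mul_sum]
  refine sum_le_sum fun j _ => ?_
  by_cases hj : j ∈ s
  · exact mul_le_mul_of_nonneg_right (hc j hj) (sq_nonneg _)
  · simp [w.inner_eq_zero_of_mem_span_image hx hj]

theorem finrank_span_image (s : Finset ι) : finrank 𝕜 (span 𝕜 (w '' s)) = #s := by
  rw [Set.image_eq_range]
  exact (finrank_span_eq_card (w.orthonormal.linearIndependent.comp _ Subtype.val_injective)).trans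
    (Fintype.card_coe s)

theorem exists_isSymmetric_apply_eq_smul (d : ι → ℝ) :
    ∃ P : E →ₗ[𝕜] E, P.IsSymmetric ∧ ∀ j, P (w j) = (d j : 𝕜) • w j := by
  classical
  refine ⟨∑ j, (d j : 𝕜) • (rankOne 𝕜 (w j) (w j) : E →ₗ[𝕜] E),
    LinearMap.isSymmetric_sum _ fun j _ =>
      (isSymmetric_rankOne_self (w j)).smul (RCLike.conj_ofReal _),
    fun k => ?_⟩
  simp [w.inner_eq_ite]

end OrthonormalBasis

theorem exists_ne_zero_mem_span_Iic_mem_span_Ici {n : ℕ} (v w : OrthonormalBasis (Fin n) 𝕜 E)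
    (i : Fin n) : ∃ x ∈ span 𝕜 (v '' ↑(Iic i)), x ∈ span 𝕜 (w '' ↑(Ici i)) ∧ x ≠ 0 := by
  have := Module.Finite.of_basis v.toBasis
  by_contra! h
  have hdim := finrank_add_finrank_le_of_disjoint (disjoint_def.2 h)
  rw [v.finrank_span_image, w.finrank_span_image, finrank_eq_card_basis v.toBasis,
    Fin.card_Iic, Fin.card_Ici, Fintype.card_fin] at hdim
  omega

namespace LinearMap.IsSymmetric

variable [FiniteDimensional 𝕜 E] {n : ℕ} (hn : finrank 𝕜 E = n)

theorem eigenvalues_eq_comp_finCongr {T : E →ₗ[𝕜] E} (hT : T.IsSymmetric) {m : ℕ}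
    (hm : finrank 𝕜 E = m) :
    hT.eigenvalues hm = hT.eigenvalues hn ∘ finCongr (hm.symm.trans hn) := by
  subst hm hn
  rfl

theorem eigenvalues_le_add_of_re_inner_le {T S : E →ₗ[𝕜] E} (hT : T.IsSymmetric)
    (hS : S.IsSymmetric) {c : ℝ}
    (h : ∀ x, RCLike.re ⟪x, T x⟫_𝕜 ≤ RCLike.re ⟪x, S x⟫_𝕜 + c * ‖x‖ ^ 2) (i : Fin n) :
    hT.eigenvalues hn i ≤ hS.eigenvalues hn i + c := by
  obtain ⟨x, hxT, hxS, hx0⟩ :=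
    exists_ne_zero_mem_span_Iic_mem_span_Ici (hT.eigenvectorBasis hn) (hS.eigenvectorBasis hn) i
  have hTx := (hT.eigenvectorBasis hn).mul_norm_sq_le_re_inner_of_mem_span
    (hT.apply_eigenvectorBasis hn) (fun j hj => hT.eigenvalues_antitone hn (mem_Iic.1 hj)) hxT
  have hSx := (hS.eigenvectorBasis hn).re_inner_le_mul_norm_sq_of_mem_span
    (hS.apply_eigenvectorBasis hn) (fun j hj => hS.eigenvalues_antitone hn (mem_Ici.1 hj)) hxS
  have hx : 0 < ‖x‖ ^ 2 := by positivity
  nlinarith [h x]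

theorem exists_posPart_sub_eigenvalues {B : E →ₗ[𝕜] E} (hB : B.IsSymmetric) (i : Fin n) :
    ∃ P : E →ₗ[𝕜] E, P.IsSymmetric ∧ (∀ x, 0 ≤ RCLike.re ⟪x, P x⟫_𝕜) ∧
      (∀ x, RCLike.re ⟪x, B x⟫_𝕜 ≤ RCLike.re ⟪x, P x⟫_𝕜 + hB.eigenvalues hn i * ‖x‖ ^ 2) ∧
      RCLike.re (P.trace 𝕜 E)
        = ∑ j ∈ Iic i, hB.eigenvalues hn j - #(Iic i) * hB.eigenvalues hn i := by
  set e := hB.eigenvalues hn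
  set w := hB.eigenvectorBasis hn
  obtain ⟨P, hP, hPw⟩ := w.exists_isSymmetric_apply_eq_smul fun j => max (e j - e i) 0
  refine ⟨P, hP, fun x => ?_, w.re_inner_le_add_of_le (hB.apply_eigenvectorBasis hn) hPw
    fun j => by linarith [le_max_left (e j - e i) 0], ?_⟩
  · rw [w.re_inner_apply_eq_sum hPw]
    exact sum_nonneg fun j _ => mul_nonneg (le_max_right _ _) (sq_nonneg _)
  · rw [← nsmul_eq_mul, ← sum_const, ← sum_sub_distrib,
      ← (show Antitone e from hB.eigenvalues_antitone hn).sum_max_sub_eq_sum_Iic i,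
      trace_eq_sum_inner P w]
    simp [hPw, inner_smul_right, w.orthonormal.1]

theorem sum_eigenvalues_add_sub_le {A B : E →ₗ[𝕜] E} (hA : A.IsSymmetric) (hB : B.IsSymmetric)
    (i : Fin n) {J : Finset (Fin n)} (hJ : #J = #(Iic i)) :
    ∑ j ∈ J, ((hA.add hB).eigenvalues hn j - hA.eigenvalues hn j)
      ≤ ∑ j ∈ Iic i, hB.eigenvalues hn j := by
  set c := hB.eigenvalues hn i
  obtain ⟨P, hP, hP_nonneg, hBP, htrP⟩ := hB.exists_posPart_sub_eigenvalues hn i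
  set ν := (hA.add hP).eigenvalues hn
  have hupper : ∀ j, (hA.add hB).eigenvalues hn j ≤ ν j + c :=
    eigenvalues_le_add_of_re_inner_le hn _ _ fun x => by
      simp only [add_apply, inner_add_right, map_add]
      linarith [hBP x]
  have hlower : ∀ j, hA.eigenvalues hn j ≤ ν j := fun j => by
    have := eigenvalues_le_add_of_re_inner_le hn hA (hA.add hP) (c := 0) (fun x => by
      simp only [add_apply, inner_add_right, map_add]
      linarith [hP_nonneg x]) j
    linarith
  have htrace : ∑ j, ν j = ∑ j, hA.eigenvalues hn j + RCLike.re (P.trace 𝕜 E) := by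
    rw [← re_trace_eq_sum_eigenvalues hn, ← re_trace_eq_sum_eigenvalues hn, map_add, map_add]
  calc ∑ j ∈ J, ((hA.add hB).eigenvalues hn j - hA.eigenvalues hn j)
      ≤ ∑ j ∈ J, ((ν j - hA.eigenvalues hn j) + c) :=
        sum_le_sum fun j _ => by linarith [hupper j]
    _ ≤ ∑ j, (ν j - hA.eigenvalues hn j) + #J * c := by
        rw [sum_add_distrib, sum_const, nsmul_eq_mul]
        gcongr
        · exact fun j _ _ => sub_nonneg.2 (hlower j)
        · exact subset_univ J
    _ = ∑ j ∈ Iic i, hB.eigenvalues hn j := by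
        rw [sum_sub_distrib, htrace, htrP, hJ]
        ring

theorem sum_eigenvalues_add {A B : E →ₗ[𝕜] E} (hA : A.IsSymmetric) (hB : B.IsSymmetric) :
    ∑ j, (hA.add hB).eigenvalues hn j = ∑ j, hA.eigenvalues hn j + ∑ j, hB.eigenvalues hn j := by
  rw [← re_trace_eq_sum_eigenvalues hn, ← re_trace_eq_sum_eigenvalues hn,
    ← re_trace_eq_sum_eigenvalues hn, map_add, map_add]

theorem sum_convexOn_eigenvalues_add_sub_le {A B : E →ₗ[𝕜] E} (hA : A.IsSymmetric)
    (hB : B.IsSymmetric) {φ : ℝ → ℝ} (hφ : ConvexOn ℝ Set.univ φ) :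
    ∑ j, φ ((hA.add hB).eigenvalues hn j - hA.eigenvalues hn j)
      ≤ ∑ j, φ (hB.eigenvalues hn j) := by
  set x := fun j => (hA.add hB).eigenvalues hn j - hA.eigenvalues hn j
  obtain ⟨ρ, hρ⟩ := exists_perm_antitone_comp x
  rw [← Equiv.sum_comp ρ]
  refine hφ.sum_le_sum_of_sum_Iic_le hρ (fun i => ?_) ?_
  · simpa [x] using sum_eigenvalues_add_sub_le hn hA hB i (card_map ρ.toEmbedding)
  · rw [Equiv.sum_comp ρ x, sum_sub_distrib, sum_eigenvalues_add hn hA hB]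
    ring

end LinearMap.IsSymmetric

-- `Matrix.IsHermitian.eigenvalues` are the sorted eigenvalues of `toEuclideanLin A`, reindexed
-- along an unspecified equivalence `Fin (Fintype.card (Fin n)) ≃ Fin n`.
theorem Matrix.IsHermitian.exists_eigenvalues_eq_comp {n : ℕ} {A : Matrix (Fin n) (Fin n) 𝕜}
    (hA : A.IsHermitian) : ∃ τ : Equiv.Perm (Fin n), hA.eigenvalues =
      (Matrix.isSymmetric_toEuclideanLin_iff.2 hA).eigenvalues finrank_euclideanSpace_fin ∘ τ :=
  ⟨(Fintype.equivOfCardEq (Fintype.card_fin _)).symm.trans (finCongr (Fintype.card_fin n)), by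
    ext i
    rw [Matrix.IsHermitian.eigenvalues, Matrix.IsHermitian.eigenvalues₀]
    exact congrFun (LinearMap.IsSymmetric.eigenvalues_eq_comp_finCongr _ _ _) _⟩

theorem Matrix.IsHermitian.eq_eigenvalues_toEuclideanLin {n : ℕ} {A : Matrix (Fin n) (Fin n) 𝕜}
    (hA : A.IsHermitian) {T : EuclideanSpace 𝕜 (Fin n) →ₗ[𝕜] EuclideanSpace 𝕜 (Fin n)}
    (hT : T.IsSymmetric) (hAT : A.toEuclideanLin = T) {μ : Fin n → ℝ} (hμ : Antitone μ)
    (hσ : ∃ σ : Equiv.Perm (Fin n), μ = hA.eigenvalues ∘ σ) :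
    μ = hT.eigenvalues finrank_euclideanSpace_fin := by
  subst hAT
  obtain ⟨σ, rfl⟩ := hσ
  obtain ⟨τ, hτ⟩ := hA.exists_eigenvalues_eq_comp
  rw [hτ] at hμ ⊢
  exact Tuple.unique_antitone (σ := τ * σ) hμ (τ := 1) (hT.eigenvalues_antitone _)

end InnerProductSpace

theorem stmt3_general (n : ℕ) (A B : Matrix (Fin n) (Fin n) ℂ)
    (hA : A.IsHermitian) (hB : B.IsHermitian) (hT : (A + B).IsHermitian)
    (lam e lamt : Fin n → ℝ)
    (hlam : Antitone lam) (he : Antitone e) (hlamt : Antitone lamt)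
    (hlam' : ∃ σ : Equiv.Perm (Fin n), lam = hA.eigenvalues ∘ σ)
    (he' : ∃ σ : Equiv.Perm (Fin n), e = hB.eigenvalues ∘ σ)
    (hlamt' : ∃ σ : Equiv.Perm (Fin n), lamt = hT.eigenvalues ∘ σ)
    (φ : ℝ → ℝ) (hφ : ConvexOn ℝ Set.univ φ) :
    ∑ j, φ (lamt j - lam j) ≤ ∑ j, φ (e j) := by
  have hA' := Matrix.isSymmetric_toEuclideanLin_iff.2 hA
  have hB' := Matrix.isSymmetric_toEuclideanLin_iff.2 hB
  obtain rfl := hA.eq_eigenvalues_toEuclideanLin hA' rfl hlam hlam'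
  obtain rfl := hB.eq_eigenvalues_toEuclideanLin hB' rfl he he'
  obtain rfl := hT.eq_eigenvalues_toEuclideanLin (hA'.add hB') (map_add _ A B) hlamt hlamt'
  exact hA'.sum_convexOn_eigenvalues_add_sub_le _ hB' hφ

/-- Ky Fan (Lidskii–Wielandt) majorization inequality: if `A`, `B` are Hermitian and
`Ã = A + B`, with eigenvalues `lam`, `e`, `lamt` respectively, listed in nonincreasing
order with multiplicity, then for any convex continuous `φ : ℝ → ℝ`,
`∑ φ(lamt j - lam j) ≤ ∑ φ(e j)`. -/
theorem stmt3 (n : ℕ) (A B : Matrix (Fin n) (Fin n) ℂ)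
    (hA : A.IsHermitian) (hB : B.IsHermitian) (hT : (A + B).IsHermitian)
    (lam e lamt : Fin n → ℝ)
    (hlam : Antitone lam) (he : Antitone e) (hlamt : Antitone lamt)
    (hlam' : ∃ σ : Equiv.Perm (Fin n), lam = hA.eigenvalues ∘ σ)
    (he' : ∃ σ : Equiv.Perm (Fin n), e = hB.eigenvalues ∘ σ)
    (hlamt' : ∃ σ : Equiv.Perm (Fin n), lamt = hT.eigenvalues ∘ σ)
    (φ : ℝ → ℝ) (hφ : ConvexOn ℝ Set.univ φ) (hφc : Continuous φ) :
    ∑ j, φ (lamt j - lam j) ≤ ∑ j, φ (e j) :=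
  stmt3_general n A B hA hB hT lam e lamt hlam he hlamt hlam' he' hlamt' φ hφ
end

section
/- Let A and Ã be self-adjoint operators on an n-dimensional complex inner product space with eigenvalues λ₁ ≥ ⋯ ≥ λₙ and λ̃₁ ≥ ⋯ ≥ λ̃ₙ respectively. Then for any 1-Lipschitz function f: ℝ → ℝ, |tr f(A) − tr f(Ã)| ≤ ‖Ã − A‖₁, where ‖·‖₁ denotes the trace norm (sum of singular values). -/
/-!
Weyl monotonicity: if `C - A` is positive semidefinite, then the decreasingly sorted eigenvalues
satisfy `λₖ(A) ≤ λₖ(C)` for every `k`. Indeed the span of the top `k + 1` eigenvectors of `A` and the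
span of the bottom `n - k` eigenvectors of `C` meet in some `x ≠ 0`, and
`λₖ(A) ‖x‖² ≤ ⟪A x, x⟫ ≤ ⟪C x, x⟫ ≤ λₖ(C) ‖x‖²`. Pairing the sorted eigenvalues, a 1-Lipschitz `f`
then gives `|tr f(A) - tr f(C)| ≤ ∑ₖ (λₖ(C) - λₖ(A)) = tr (C - A)`.

For general `A, A'`, split `D = A' - A` as `D⁺ - D⁻` with `D^± ≥ 0` and pass through
`C = A + D⁺ = A' + D⁻`: by the triangle inequality the difference is at most
`tr D⁺ + tr D⁻ = ∑ |λⱼ(D)| = ‖D‖₁`.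
-/

open Module Submodule Finset
open scoped InnerProductSpace

theorem Submodule.exists_mem_inf_ne_zero_of_finrank_lt {K V : Type*} [DivisionRing K]
    [AddCommGroup V] [Module K V] [FiniteDimensional K V] {s t : Submodule K V}
    (h : finrank K V < finrank K s + finrank K t) : ∃ x ∈ s, x ∈ t ∧ x ≠ 0 := by
  by_contra! hst
  exact h.not_ge (finrank_add_finrank_le_of_disjoint (disjoint_def.2 hst))

theorem LinearIndependent.finrank_span_image_finset {K V ι : Type*} [DivisionRing K]
    [AddCommGroup V] [Module K V] {v : ι → V} (hv : LinearIndependent K v) (s : Finset ι) :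
    finrank K (span K (v '' s)) = #s := by
  rw [Set.image_eq_range]
  exact (finrank_span_eq_card (hv.comp _ Subtype.val_injective)).trans (Fintype.card_coe s)

theorem LipschitzWith.abs_sum_sub_sum_le {ι : Type*} (s : Finset ι) {f : ℝ → ℝ}
    (hf : LipschitzWith 1 f) {u v : ι → ℝ} (huv : ∀ i ∈ s, u i ≤ v i) :
    |∑ i ∈ s, f (u i) - ∑ i ∈ s, f (v i)| ≤ ∑ i ∈ s, v i - ∑ i ∈ s, u i := by
  rw [← sum_sub_distrib, ← sum_sub_distrib]
  refine (abs_sum_le_sum_abs _ _).trans (sum_le_sum fun i hi => ?_)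
  have := hf.dist_le_mul (u i) (v i)
  rw [Real.dist_eq, Real.dist_eq, NNReal.coe_one, one_mul, abs_sub_comm (u i),
    abs_of_nonneg (sub_nonneg.2 (huv i hi))] at this
  exact this

namespace LinearMap.IsSymmetric

variable {𝕜 E : Type*} [RCLike 𝕜] [NormedAddCommGroup E] [InnerProductSpace 𝕜 E]
  [FiniteDimensional 𝕜 E] {n : ℕ} {T : E →ₗ[𝕜] E} (hT : T.IsSymmetric) (hn : finrank 𝕜 E = n)

theorem re_inner_apply_sum_smul_eigenvectorBasis (s : Finset (Fin n)) (c : Fin n → 𝕜) :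
    RCLike.re ⟪T (∑ i ∈ s, c i • hT.eigenvectorBasis hn i),
        ∑ i ∈ s, c i • hT.eigenvectorBasis hn i⟫_𝕜 = ∑ i ∈ s, hT.eigenvalues hn i * ‖c i‖ ^ 2 := by
  simp only [map_sum, map_smul, apply_eigenvectorBasis, smul_smul]
  rw [(hT.eigenvectorBasis hn).orthonormal.inner_sum, map_sum]
  refine sum_congr rfl fun i _ => ?_
  rw [map_mul (starRingEnd 𝕜), RCLike.conj_ofReal, mul_right_comm, RCLike.conj_mul, mul_comm]
  norm_cast

theorem norm_sum_smul_eigenvectorBasis_sq (s : Finset (Fin n)) (c : Fin n → 𝕜) :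
    ‖∑ i ∈ s, c i • hT.eigenvectorBasis hn i‖ ^ 2 = ∑ i ∈ s, ‖c i‖ ^ 2 := by
  rw [← RCLike.ofReal_inj (K := 𝕜)]
  push_cast
  rw [← inner_self_eq_norm_sq_to_K, (hT.eigenvectorBasis hn).orthonormal.inner_sum]
  simp only [RCLike.conj_mul]

theorem mul_norm_sq_le_re_inner_apply_of_mem_span {s : Finset (Fin n)} {a : ℝ}
    (ha : ∀ i ∈ s, a ≤ hT.eigenvalues hn i) {x : E}
    (hx : x ∈ span 𝕜 (hT.eigenvectorBasis hn '' s)) : a * ‖x‖ ^ 2 ≤ RCLike.re ⟪T x, x⟫_𝕜 := by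
  obtain ⟨c, rfl⟩ := (mem_span_image_finset_iff_exists_fun' 𝕜).1 hx
  rw [norm_sum_smul_eigenvectorBasis_sq, re_inner_apply_sum_smul_eigenvectorBasis, mul_sum]
  exact sum_le_sum fun i hi => mul_le_mul_of_nonneg_right (ha i hi) (sq_nonneg _)

theorem re_inner_apply_le_mul_norm_sq_of_mem_span {s : Finset (Fin n)} {a : ℝ}
    (ha : ∀ i ∈ s, hT.eigenvalues hn i ≤ a) {x : E}
    (hx : x ∈ span 𝕜 (hT.eigenvectorBasis hn '' s)) : RCLike.re ⟪T x, x⟫_𝕜 ≤ a * ‖x‖ ^ 2 := by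
  obtain ⟨c, rfl⟩ := (mem_span_image_finset_iff_exists_fun' 𝕜).1 hx
  rw [norm_sum_smul_eigenvectorBasis_sq, re_inner_apply_sum_smul_eigenvectorBasis, mul_sum]
  exact sum_le_sum fun i hi => mul_le_mul_of_nonneg_right (ha i hi) (sq_nonneg _)

theorem eigenvalues_le_eigenvalues_of_le {S : E →ₗ[𝕜] E} (hS : S.IsSymmetric) (hST : S ≤ T)
    (i : Fin n) : hS.eigenvalues hn i ≤ hT.eigenvalues hn i := by
  have hdim : finrank 𝕜 E < finrank 𝕜 (span 𝕜 (hS.eigenvectorBasis hn '' ↑(Iic i))) +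
      finrank 𝕜 (span 𝕜 (hT.eigenvectorBasis hn '' ↑(Ici i))) := by
    rw [(hS.eigenvectorBasis hn).orthonormal.linearIndependent.finrank_span_image_finset,
      (hT.eigenvectorBasis hn).orthonormal.linearIndependent.finrank_span_image_finset,
      Fin.card_Iic, Fin.card_Ici, hn]
    omega
  obtain ⟨x, hxS, hxT, hx⟩ := exists_mem_inf_ne_zero_of_finrank_lt hdim
  have hS_lower := hS.mul_norm_sq_le_re_inner_apply_of_mem_span hn
    (fun j hj => hS.eigenvalues_antitone hn (mem_Iic.1 hj)) hxS
  have hT_upper := hT.re_inner_apply_le_mul_norm_sq_of_mem_span hn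
    (fun j hj => hT.eigenvalues_antitone hn (mem_Ici.1 hj)) hxT
  have hST_inner : RCLike.re ⟪S x, x⟫_𝕜 ≤ RCLike.re ⟪T x, x⟫_𝕜 := by
    have := hST.re_inner_nonneg_left x
    rwa [sub_apply, inner_sub_left, map_sub, sub_nonneg] at this
  exact le_of_mul_le_mul_right (hS_lower.trans (hST_inner.trans hT_upper)) (pow_pos (norm_pos_iff.2 hx) 2)

end LinearMap.IsSymmetric

open scoped ComplexOrder

namespace Matrix

variable {𝕜 m : Type*} [RCLike 𝕜] [Fintype m] [DecidableEq m] {A B : Matrix m m 𝕜}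

open scoped MatrixOrder in
theorem posSemidef_cfc {f : ℝ → ℝ} (hf : ∀ x, 0 ≤ f x) : (cfc f A).PosSemidef :=
  nonneg_iff_posSemidef.1 (cfc_nonneg fun x _ => hf x)

namespace IsHermitian

theorem eigenvalues₀_le_eigenvalues₀_of_posSemidef_sub (hA : A.IsHermitian) (hB : B.IsHermitian)
    (hAB : (B - A).PosSemidef) (i : Fin (Fintype.card m)) :
    hA.eigenvalues₀ i ≤ hB.eigenvalues₀ i :=
  LinearMap.IsSymmetric.eigenvalues_le_eigenvalues_of_le _ _ _ (by
    rw [LinearMap.le_def, ← map_sub, isPositive_toEuclideanLin_iff]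
    exact hAB) i

theorem sum_comp_eigenvalues_eq_sum_comp_eigenvalues₀ (hA : A.IsHermitian) (g : ℝ → ℝ) :
    ∑ j, g (hA.eigenvalues j) = ∑ i, g (hA.eigenvalues₀ i) :=
  Equiv.sum_comp _ (g ∘ hA.eigenvalues₀)

theorem re_trace_eq_sum_eigenvalues₀ (hA : A.IsHermitian) :
    RCLike.re A.trace = ∑ i, hA.eigenvalues₀ i := by
  simpa [hA.trace_eq_sum_eigenvalues] using hA.sum_comp_eigenvalues_eq_sum_comp_eigenvalues₀ id

theorem re_trace_cfc (hA : A.IsHermitian) (f : ℝ → ℝ) :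
    RCLike.re (cfc f A).trace = ∑ j, f (hA.eigenvalues j) := by
  rw [hA.cfc_eq, IsHermitian.cfc, Unitary.conjStarAlgAut_apply, trace_mul_cycle,
    Unitary.coe_star_mul_self, one_mul, trace_diagonal, map_sum]
  simp

theorem abs_sum_sub_sum_le_re_trace_sub (hA : A.IsHermitian) (hB : B.IsHermitian)
    (hAB : (B - A).PosSemidef) {f : ℝ → ℝ} (hf : LipschitzWith 1 f) :
    |∑ j, f (hA.eigenvalues j) - ∑ j, f (hB.eigenvalues j)| ≤ RCLike.re (B - A).trace := by
  rw [trace_sub, map_sub, hA.re_trace_eq_sum_eigenvalues₀, hB.re_trace_eq_sum_eigenvalues₀,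
    hA.sum_comp_eigenvalues_eq_sum_comp_eigenvalues₀, hB.sum_comp_eigenvalues_eq_sum_comp_eigenvalues₀]
  exact hf.abs_sum_sub_sum_le univ fun i _ =>
    eigenvalues₀_le_eigenvalues₀_of_posSemidef_sub hA hB hAB i

theorem exists_posSemidef_posSemidef_sub_re_trace_add_eq (hA : A.IsHermitian) :
    ∃ P : Matrix m m 𝕜, P.PosSemidef ∧ (P - A).PosSemidef ∧
      RCLike.re P.trace + RCLike.re (P - A).trace = ∑ j, |hA.eigenvalues j| := by
  have hsub : cfc (fun x : ℝ => max x 0) A - A = cfc (fun x : ℝ => max (-x) 0) A := by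
    calc cfc (fun x : ℝ => max x 0) A - A
        = cfc (fun x : ℝ => max x 0) A - cfc (fun x : ℝ => x) A := by
          rw [cfc_id' ℝ A hA.isSelfAdjoint]
      _ = cfc (fun x : ℝ => max x 0 - x) A := (cfc_sub _ _ A).symm
      _ = cfc (fun x : ℝ => max (-x) 0) A :=
          cfc_congr fun x _ => by linarith [max_zero_sub_eq_self x]
  refine ⟨_, posSemidef_cfc fun x => le_max_right _ _,
    hsub ▸ posSemidef_cfc fun x => le_max_right _ _, ?_⟩
  rw [hsub, hA.re_trace_cfc, hA.re_trace_cfc, ← sum_add_distrib]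
  exact sum_congr rfl fun j _ => max_zero_add_max_neg_zero_eq_abs_self _

end IsHermitian

end Matrix

/-- For Hermitian matrices `A`, `A'` and a 1-Lipschitz `f : ℝ → ℝ`,
`|tr f(A) - tr f(A')| ≤ ‖A' - A‖₁`, where the trace norm of the Hermitian matrix
`A' - A` is the sum of the absolute values of its eigenvalues. -/
theorem stmt4 (n : ℕ) (A A' : Matrix (Fin n) (Fin n) ℂ)
    (hA : A.IsHermitian) (hA' : A'.IsHermitian) (hD : (A' - A).IsHermitian)
    (f : ℝ → ℝ) (hf : LipschitzWith 1 f) :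
    |∑ j, f (hA.eigenvalues j) - ∑ j, f (hA'.eigenvalues j)| ≤ ∑ j, |hD.eigenvalues j| := by
  obtain ⟨P, hP, hPD, htrace⟩ := hD.exists_posSemidef_posSemidef_sub_re_trace_add_eq
  have hC : (A + P).IsHermitian := hA.add hP.isHermitian
  have hCA : A + P - A = P := add_sub_cancel_left A P
  have hCA' : A + P - A' = P - (A' - A) := by abel
  calc |∑ j, f (hA.eigenvalues j) - ∑ j, f (hA'.eigenvalues j)|
      ≤ |∑ j, f (hA.eigenvalues j) - ∑ j, f (hC.eigenvalues j)| +
        |∑ j, f (hC.eigenvalues j) - ∑ j, f (hA'.eigenvalues j)| := abs_sub_le _ _ _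
    _ ≤ RCLike.re (A + P - A).trace + RCLike.re (A + P - A').trace := by
      rw [abs_sub_comm (∑ j, f (hC.eigenvalues j))]
      exact add_le_add (hA.abs_sum_sub_sum_le_re_trace_sub hC (by rwa [hCA]) hf)
        (hA'.abs_sum_sub_sum_le_re_trace_sub hC (by rwa [hCA']) hf)
    _ = ∑ j, |hD.eigenvalues j| := by rw [hCA, hCA', htrace]
end

section
/- Let N, Ñ : ℝ → [0,1] be nondecreasing functions such that for all E ∈ ℝ and all δ ∈ (0, 1/2], one has Ñ(E) ≤ N(E + δ) + ε/δ and Ñ(E) ≥ N(E − δ) − ε/δ, and such that N satisfies the log-Hölder bound: |N(E) − N(E′)| ≤ C₀/log(1/δ) whenever E′ < E ≤ E′ + δ ≤ E′ + 1/2. Then sup_E |N(E) − Ñ(E)| ≤ C/log₊(1/ε), where C depends only on C₀ and log₊(x) = max(log x, 1). -/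
/-- If `N`, `Ñ` are nondecreasing functions into `[0,1]` satisfying
`Ñ(E) ≤ N(E+δ) + ε/δ` and `Ñ(E) ≥ N(E-δ) - ε/δ` for all `E` and `δ ∈ (0,1/2]`, and `N`
is log-Hölder continuous with constant `C₀`, then
`sup_E |N(E) - Ñ(E)| ≤ C / log₊(1/ε)` with `C = C(C₀)` and `log₊ x = max (log x) 1`. -/
theorem stmt9 (C0 : ℝ) (hC0 : 0 < C0) :
    ∃ C : ℝ, 0 < C ∧
      ∀ (N Nt : ℝ → ℝ) (ε : ℝ), 0 < ε → ε < 1 / 2 →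
        Monotone N → Monotone Nt →
        (∀ E, 0 ≤ N E ∧ N E ≤ 1) → (∀ E, 0 ≤ Nt E ∧ Nt E ≤ 1) →
        (∀ E δ, 0 < δ → δ ≤ 1 / 2 →
          Nt E ≤ N (E + δ) + ε / δ ∧ N (E - δ) - ε / δ ≤ Nt E) →
        (∀ E' E δ, E' < E → E ≤ E' + δ → 0 < δ → δ ≤ 1 / 2 →
          |N E - N E'| ≤ C0 / Real.log (1 / δ)) →
        ∀ E, |N E - Nt E| ≤ C / max (Real.log (1 / ε)) 1 := by
  refine ⟨2 * C0 + 4, by positivity, ?_⟩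
  intro N Nt ε hε hε2 hN hNt hNb hNtb htrans hhold E
  set L := max (Real.log (1 / ε)) 1 with hL
  have hL1 : (1:ℝ) ≤ L := le_max_right _ _
  have hLpos : 0 < L := lt_of_lt_of_le one_pos hL1
  have hsε : 0 < Real.sqrt ε := Real.sqrt_pos.2 hε
  have hsq : Real.sqrt ε * Real.sqrt ε = ε := Real.mul_self_sqrt hε.le
  have hsε1 : Real.sqrt ε ≤ 1 := by
    nlinarith [hsq, Real.sqrt_nonneg ε]
  set δ := Real.sqrt ε / 2 with hδ
  have hδpos : 0 < δ := by positivity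
  have hδhalf : δ ≤ 1 / 2 := by rw [hδ]; linarith
  have hεδ : ε / δ = 2 * Real.sqrt ε := by
    rw [hδ]; field_simp; nlinarith [hsq]
  have hlogεpos : 0 < Real.log (1 / ε) := Real.log_pos (by rw [lt_div_iff₀ hε]; linarith)
  have hlogδ : Real.log (1 / δ) = Real.log 2 + Real.log (1 / ε) / 2 := by
    have h1δ : (1:ℝ) / δ = 2 / Real.sqrt ε := by
      rw [hδ]; field_simp
    rw [h1δ, Real.log_div two_ne_zero (ne_of_gt hsε), Real.log_sqrt hε.le,
      one_div, Real.log_inv]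
    ring
  have hLδ : L / 2 ≤ Real.log (1 / δ) := by
    have hlog2 : (0.6931471803 : ℝ) < Real.log 2 := Real.log_two_gt_d9
    rcases max_cases (Real.log (1 / ε)) 1 with ⟨h, _⟩ | ⟨h, _⟩ <;>
      rw [hL, h, hlogδ] <;> linarith
  have hlogδpos : 0 < Real.log (1 / δ) := lt_of_lt_of_le (by positivity) hLδ
  -- ε/δ ≤ 4 / L
  have h1 : Real.log (1 / ε) ≤ 2 / Real.sqrt ε := by
    have h2 := Real.log_le_sub_one_of_pos (x := 1 / Real.sqrt ε) (by positivity)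
    have h3 : Real.log (1 / ε) = 2 * Real.log (1 / Real.sqrt ε) := by
      rw [one_div, one_div, Real.log_inv, Real.log_inv, Real.log_sqrt hε.le]; ring
    rw [h3]
    have h4 : 2 / Real.sqrt ε = 2 * (1 / Real.sqrt ε) := by ring
    have h5 : 0 < 1 / Real.sqrt ε := by positivity
    rw [h4]; linarith
  have key : 2 * Real.sqrt ε * L ≤ 4 := by
    have h2 : Real.sqrt ε * (2 / Real.sqrt ε) = 2 := by field_simp
    have h3 := mul_le_mul_of_nonneg_left h1 (Real.sqrt_nonneg ε)
    rcases max_cases (Real.log (1 / ε)) 1 with ⟨h, _⟩ | ⟨h, _⟩ <;>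
      rw [hL, h] <;> nlinarith
  have hεδ4 : ε / δ ≤ 4 / L := by
    rw [hεδ, le_div_iff₀ hLpos]; exact key
  -- Hölder bound
  have hC0L : C0 / Real.log (1 / δ) ≤ 2 * C0 / L := by
    have h4 : C0 / Real.log (1 / δ) ≤ C0 / (L / 2) := by
      gcongr
    have h5 : C0 / (L / 2) = 2 * C0 / L := by
      field_simp
    linarith [h4, h5.ge, h5.le]
  obtain ⟨hu, hl⟩ := htrans E δ hδpos hδhalf
  have hH1 := hhold E (E + δ) δ (by linarith) (by linarith) hδpos hδhalf
  have hH2 := hhold (E - δ) E δ (by linarith) (by linarith) hδpos hδhalf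
  obtain ⟨hH1a, hH1b⟩ := abs_le.mp hH1
  obtain ⟨hH2a, hH2b⟩ := abs_le.mp hH2
  have hsplit : (2 * C0 + 4) / L = 2 * C0 / L + 4 / L := add_div _ _ _
  rw [abs_sub_le_iff, hsplit]
  constructor <;> linarith
end

section
/- Fix d ≥ 1 and α ≤ d/2 − 1 with α > 0. Let dρ(λ) = C_d λ^{d/2 − 1} dλ on [0, ∞) and dρ̃(λ) = C_d (λ − δ)_+^{d/2 − 1} dλ (the translate of ρ by δ > 0). For ε > 0 let f_ε(x) = max(x − ε, 0). Then liminf_{ε→0} |∫ f_ε((1+λ)^{−α}) dρ(λ) − ∫ f_ε((1+λ)^{−α}) dρ̃(λ)| = +∞. -/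
/-!
Write `p = d/2 - 1`. For `L = max 1 δ ≤ λ`, the tangent-line bound for `x ↦ x ^ (-α)` gives
`((1+λ)^(-α) - (1+λ+δ)^(-α)) λ^p ≥ αδ (3λ)^(-α-1) λ^p ≥ αδ 3^(-α-1) / λ`, using `α ≤ p`,
while cutting at level `ε` costs at most `ε C T^p` per unit length on `[L, T]`. Hence the
difference of the integrals is at least `αδ 3^(-α-1) C log (T / L) - ε C T^p (T - L)` for
every `T ≥ L`; letting `ε → 0` and then `T → ∞` shows that it diverges.
-/

open MeasureTheory Filter Topology Set Real

lemma rpow_neg_sub_rpow_neg_ge {α a b : ℝ} (hα : 0 ≤ α) (ha : 0 < a) (hab : a ≤ b) :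
    α * (b - a) * b ^ (-α - 1) ≤ a ^ (-α) - b ^ (-α) := by
  have hb : 0 < b := ha.trans_le hab
  have ht : 0 < a / b := div_pos ha hb
  -- `t ^ (-α) = exp (-α log t) ≥ 1 - α log t ≥ 1 + α (1 - t)`
  have bernoulli : 1 + α * (1 - a / b) ≤ (a / b) ^ (-α) := by
    rw [rpow_def_of_pos ht]
    nlinarith [add_one_le_exp (log (a / b) * -α), log_le_sub_one_of_pos ht]
  have hbα : 0 < b ^ (-α) := rpow_pos_of_pos hb _
  rw [div_rpow ha.le hb.le, le_div_iff₀ hbα] at bernoulli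
  have : α * (b - a) * b ^ (-α - 1) = α * (1 - a / b) * b ^ (-α) := by
    rw [rpow_sub_one hb.ne']
    field_simp
  linarith

lemma div_le_rpow_neg_sub_rpow_neg_mul_rpow {α δ p lam : ℝ} (hα : 0 ≤ α) (hδ : 0 ≤ δ)
    (hαp : α ≤ p) (hlam : 1 ≤ lam) (hδlam : δ ≤ lam) :
    α * δ * 3 ^ (-α - 1) / lam ≤ ((1 + lam) ^ (-α) - (1 + lam + δ) ^ (-α)) * lam ^ p := by
  have hlam0 : 0 < lam := one_pos.trans_le hlam
  have hsplit : 3 ^ (-α - 1) / lam = (3 * lam) ^ (-α - 1) * lam ^ α := by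
    rw [mul_rpow (by norm_num) hlam0.le, mul_assoc, ← rpow_add hlam0,
      show -α - 1 + α = -1 by ring, rpow_neg_one, div_eq_mul_inv]
  have hshift : (3 * lam) ^ (-α - 1) ≤ (1 + lam + δ) ^ (-α - 1) :=
    rpow_le_rpow_of_nonpos (by positivity) (by linarith) (by linarith)
  have hpow : lam ^ α ≤ lam ^ p := rpow_le_rpow_of_exponent_le hlam hαp
  have htangent := rpow_neg_sub_rpow_neg_ge hα (by positivity : (0 : ℝ) < 1 + lam)
    (le_add_of_nonneg_right hδ)
  rw [add_sub_cancel_left] at htangent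
  calc α * δ * 3 ^ (-α - 1) / lam = α * δ * ((3 * lam) ^ (-α - 1) * lam ^ α) := by
        rw [mul_div_assoc, hsplit]
    _ ≤ α * δ * ((1 + lam + δ) ^ (-α - 1) * lam ^ p) := by gcongr
    _ = α * δ * (1 + lam + δ) ^ (-α - 1) * lam ^ p := by ring
    _ ≤ ((1 + lam) ^ (-α) - (1 + lam + δ) ^ (-α)) * lam ^ p := by gcongr

lemma continuousOn_max_rpow_sub_mul {α ε C p : ℝ} {u : ℝ → ℝ} {s : Set ℝ}
    (hu : ContinuousOn u s) (hu0 : ∀ lam ∈ s, u lam ≠ 0) (hp : 0 ≤ p) :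
    ContinuousOn (fun lam => max (u lam ^ (-α) - ε) 0 * (C * lam ^ p)) s :=
  (((hu.rpow_const fun lam hlam => Or.inl (hu0 lam hlam)).sub continuousOn_const).sup
    continuousOn_const).mul
    (continuousOn_const.mul (continuousOn_id.rpow_const fun _ _ => Or.inr hp))

lemma integrableOn_Ioi_max_rpow_sub_mul {α ε C p : ℝ} {u : ℝ → ℝ} (hα : 0 < α) (hε : 0 < ε)
    (hp : 0 ≤ p) (hu : Continuous u) (hlt : ∀ lam, 0 ≤ lam → lam < u lam) :
    IntegrableOn (fun lam => max (u lam ^ (-α) - ε) 0 * (C * lam ^ p)) (Ioi 0) := by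
  set R := ε ^ (-α⁻¹)
  have hR : 0 < R := rpow_pos_of_pos hε _
  rw [← Ioc_union_Ioi_eq_Ioi hR.le]
  refine IntegrableOn.union ?_ (integrableOn_zero.congr_fun (fun lam hlam => ?_) measurableSet_Ioi)
  · refine (continuousOn_max_rpow_sub_mul hu.continuousOn (fun lam hlam => ?_) hp
      |>.integrableOn_compact isCompact_Icc).mono_set Ioc_subset_Icc_self
    exact (hlam.1.trans_lt (hlt lam hlam.1)).ne'
  · -- the integrand vanishes beyond `R = ε ^ (-1/α)`
    have hle : u lam ^ (-α) ≤ ε := by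
      calc u lam ^ (-α) ≤ R ^ (-α) :=
            rpow_le_rpow_of_nonpos hR
              ((mem_Ioi.mp hlam).le.trans (hlt lam (hR.trans (mem_Ioi.mp hlam)).le).le)
              (by linarith)
        _ = ε := by rw [← rpow_mul hε.le, neg_mul_neg, inv_mul_cancel₀ hα.ne', rpow_one]
    simp [max_eq_right (sub_nonpos.mpr hle)]

lemma max_rpow_sub_mul_le {α δ ε C p lam : ℝ} (hα : 0 ≤ α) (hδ : 0 ≤ δ) (hC : 0 ≤ C)
    (hlam : 0 < lam) :
    max ((1 + lam + δ) ^ (-α) - ε) 0 * (C * lam ^ p) ≤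
      max ((1 + lam) ^ (-α) - ε) 0 * (C * lam ^ p) := by
  have : (1 + lam + δ) ^ (-α) ≤ (1 + lam) ^ (-α) :=
    rpow_le_rpow_of_nonpos (by linarith) (by linarith) (by linarith)
  gcongr

lemma mul_inv_sub_le_max_rpow_sub_mul_sub {α δ ε C p T lam : ℝ} (hα : 0 ≤ α) (hδ : 0 ≤ δ)
    (hε : 0 ≤ ε) (hC : 0 ≤ C) (hαp : α ≤ p) (hlam : 1 ≤ lam) (hδlam : δ ≤ lam) (hlamT : lam ≤ T) :
    α * δ * 3 ^ (-α - 1) * C * lam⁻¹ - ε * (C * T ^ p) ≤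
      max ((1 + lam) ^ (-α) - ε) 0 * (C * lam ^ p) -
        max ((1 + lam + δ) ^ (-α) - ε) 0 * (C * lam ^ p) := by
  have hlam0 : 0 < lam := one_pos.trans_le hlam
  have hb : 0 ≤ (1 + lam + δ) ^ (-α) := rpow_nonneg (by linarith) _
  have hmax : (1 + lam) ^ (-α) - (1 + lam + δ) ^ (-α) - ε ≤
      max ((1 + lam) ^ (-α) - ε) 0 - max ((1 + lam + δ) ^ (-α) - ε) 0 := by
    have := max_le (by linarith : (1 + lam + δ) ^ (-α) - ε ≤ (1 + lam + δ) ^ (-α)) hb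
    linarith [le_max_left ((1 + lam) ^ (-α) - ε) 0]
  have hpow : lam ^ p ≤ T ^ p := rpow_le_rpow hlam0.le hlamT (hα.trans hαp)
  have h1 := mul_le_mul_of_nonneg_left
    (div_le_rpow_neg_sub_rpow_neg_mul_rpow hα hδ hαp hlam hδlam) hC
  have h2 := mul_le_mul_of_nonneg_right hmax (by positivity : 0 ≤ C * lam ^ p)
  have h3 := mul_le_mul_of_nonneg_left (mul_le_mul_of_nonneg_left hpow hC) hε
  rw [mul_div_assoc'] at h1
  rw [← div_eq_mul_inv, mul_comm _ C]
  linarith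

lemma le_integral_max_rpow_sub_mul {α δ ε C p L T : ℝ} (hα : 0 < α) (hδ : 0 ≤ δ) (hε : 0 ≤ ε)
    (hC : 0 ≤ C) (hαp : α ≤ p) (hL : 1 ≤ L) (hLδ : δ ≤ L) (hLT : L ≤ T) :
    α * δ * 3 ^ (-α - 1) * C * log (T / L) - ε * (C * T ^ p * (T - L)) ≤
      ∫ lam in L..T, (max ((1 + lam) ^ (-α) - ε) 0 * (C * lam ^ p) -
        max ((1 + lam + δ) ^ (-α) - ε) 0 * (C * lam ^ p)) := by
  have hL0 : 0 < L := one_pos.trans_le hL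
  have hpos : ∀ lam ∈ uIcc L T, 0 < lam := fun lam hlam => by
    rw [uIcc_of_le hLT] at hlam; exact hL0.trans_le hlam.1
  set k := α * δ * 3 ^ (-α - 1) * C
  have hinv : IntervalIntegrable (fun lam : ℝ => lam⁻¹) volume L T :=
    intervalIntegral.intervalIntegrable_inv (fun lam hlam => (hpos lam hlam).ne')
      continuousOn_id
  have hmin : ∫ lam in L..T, (k * lam⁻¹ - ε * (C * T ^ p)) =
      k * log (T / L) - ε * (C * T ^ p * (T - L)) := by
    rw [intervalIntegral.integral_sub (hinv.const_mul _) intervalIntegrable_const,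
      intervalIntegral.integral_const_mul, integral_inv_of_pos hL0 (hL0.trans_le hLT),
      intervalIntegral.integral_const, smul_eq_mul]
    ring
  rw [← hmin]
  refine intervalIntegral.integral_mono_on hLT ((hinv.const_mul _).sub intervalIntegrable_const)
    (ContinuousOn.sub ?_ ?_).intervalIntegrable fun lam hlam =>
      mul_inv_sub_le_max_rpow_sub_mul_sub hα.le hδ hε hC hαp (hL.trans hlam.1)
        (hLδ.trans hlam.1) hlam.2
  all_goals
    exact continuousOn_max_rpow_sub_mul (by fun_prop)
      (fun lam hlam => by linarith [hpos lam hlam]) (hα.le.trans hαp)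

lemma tendsto_nhdsGT_zero_atTop_of_sub_mul_le {f A K : ℝ → ℝ} (hA : Tendsto A atTop atTop)
    (hf : ∀ᶠ T in atTop, ∀ ε > 0, A T - ε * K T ≤ f ε) : Tendsto f (𝓝[>] 0) atTop := by
  refine tendsto_atTop.2 fun M => ?_
  obtain ⟨T, hAT, hfT⟩ := ((hA.eventually_ge_atTop (M + 1)).and hf).exists
  have hsmall : ∀ᶠ ε in 𝓝[>] (0 : ℝ), ε * K T < 1 := by
    have : Tendsto (fun ε => ε * K T) (𝓝[>] 0) (𝓝 0) := by
      simpa using (tendsto_id.mul_const (K T)).mono_left (nhdsWithin_le_nhds (a := (0 : ℝ)))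
    exact this.eventually (gt_mem_nhds one_pos)
  filter_upwards [hsmall, self_mem_nhdsWithin] with ε hε hε0
  linarith [hfT ε hε0]

lemma le_abs_integral_sub_integral {α δ ε C p L T : ℝ} (hα : 0 < α) (hδ : 0 ≤ δ) (hε : 0 < ε)
    (hC : 0 ≤ C) (hαp : α ≤ p) (hL : 1 ≤ L) (hLδ : δ ≤ L) (hLT : L ≤ T) :
    α * δ * 3 ^ (-α - 1) * C * log (T / L) - ε * (C * T ^ p * (T - L)) ≤
      |(∫ lam in Ioi 0, max ((1 + lam) ^ (-α) - ε) 0 * (C * lam ^ p)) -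
        ∫ lam in Ioi 0, max ((1 + lam + δ) ^ (-α) - ε) 0 * (C * lam ^ p)| := by
  have hp : 0 ≤ p := hα.le.trans hαp
  have hint : IntegrableOn (fun lam => max ((1 + lam) ^ (-α) - ε) 0 * (C * lam ^ p)) (Ioi 0) :=
    integrableOn_Ioi_max_rpow_sub_mul hα hε hp (by fun_prop) fun _ _ => by linarith
  have hint' :
      IntegrableOn (fun lam => max ((1 + lam + δ) ^ (-α) - ε) 0 * (C * lam ^ p)) (Ioi 0) :=
    integrableOn_Ioi_max_rpow_sub_mul hα hε hp (by fun_prop) fun _ _ => by linarith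
  have hnonneg : ∀ lam ∈ Ioi (0 : ℝ), 0 ≤ max ((1 + lam) ^ (-α) - ε) 0 * (C * lam ^ p) -
      max ((1 + lam + δ) ^ (-α) - ε) 0 * (C * lam ^ p) := fun lam hlam =>
    sub_nonneg.2 (max_rpow_sub_mul_le hα.le hδ hC hlam)
  rw [← integral_sub hint hint', abs_of_nonneg (setIntegral_nonneg measurableSet_Ioi hnonneg)]
  refine (le_integral_max_rpow_sub_mul hα hδ hε.le hC hαp hL hLδ hLT).trans ?_
  rw [intervalIntegral.integral_of_le hLT]
  exact setIntegral_mono_set (hint.sub hint')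
    ((ae_restrict_iff' measurableSet_Ioi).2 (ae_of_all _ hnonneg))
    (Ioc_subset_Ioi_self.trans (Ioi_subset_Ioi (by linarith))).eventuallyLE

theorem stmt14_general (d : ℕ) (α δ Cd : ℝ)
    (hα : 0 < α) (hαd : α ≤ (d : ℝ) / 2 - 1) (hδ : 0 < δ) (hC : 0 < Cd) :
    Tendsto (fun ε : ℝ =>
      |(∫ lam in Set.Ioi (0 : ℝ),
          max ((1 + lam) ^ (-α) - ε) 0 * (Cd * lam ^ ((d : ℝ) / 2 - 1))) -
        ∫ lam in Set.Ioi (0 : ℝ),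
          max ((1 + lam + δ) ^ (-α) - ε) 0 * (Cd * lam ^ ((d : ℝ) / 2 - 1))|)
      (𝓝[>] (0 : ℝ)) atTop := by
  set L := max 1 δ
  have hL0 : 0 < L := one_pos.trans_le (le_max_left 1 δ)
  refine tendsto_nhdsGT_zero_atTop_of_sub_mul_le
    (A := fun T => α * δ * 3 ^ (-α - 1) * Cd * log (T / L))
    (K := fun T => Cd * T ^ ((d : ℝ) / 2 - 1) * (T - L)) ?_ ?_
  · exact (tendsto_log_atTop.comp (tendsto_id.atTop_div_const hL0)).const_mul_atTop
      (by positivity)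
  · filter_upwards [eventually_ge_atTop L] with T hT ε hε
    exact le_abs_integral_sub_integral hα hδ.le hε hC.le hαd (le_max_left 1 δ)
      (le_max_right 1 δ) hT

/-- Optimality of `α > d/2 - 1`: for `0 < α ≤ d/2 - 1`, with `dρ(λ) = C_d λ^{d/2-1} dλ`
on `(0,∞)` and `ρ̃` its translate by `δ > 0`, and `f_ε(x) = max (x - ε) 0`,
`liminf_{ε → 0⁺} |∫ f_ε((1+λ)^{-α}) dρ - ∫ f_ε((1+λ)^{-α}) dρ̃| = +∞`, i.e. the
difference tends to infinity as `ε → 0⁺`. -/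
theorem stmt14 (d : ℕ) (hd : 1 ≤ d) (α δ Cd : ℝ)
    (hα : 0 < α) (hαd : α ≤ (d : ℝ) / 2 - 1) (hδ : 0 < δ) (hC : 0 < Cd) :
    Tendsto (fun ε : ℝ =>
      |(∫ lam in Set.Ioi (0 : ℝ),
          max ((1 + lam) ^ (-α) - ε) 0 * (Cd * lam ^ ((d : ℝ) / 2 - 1))) -
        ∫ lam in Set.Ioi (0 : ℝ),
          max ((1 + lam + δ) ^ (-α) - ε) 0 * (Cd * lam ^ ((d : ℝ) / 2 - 1))|)
      (𝓝[>] (0 : ℝ)) atTop :=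
  stmt14_general d α δ Cd hα hαd hδ hC
end
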